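/- Let O ⊂ A be an extension of domains with fraction fields F ⊂ K, let s ∈ A generate K over F (i.e. K = F(s) and every element of A is a quotient of elements of O[s]), and let N be a torsion-free A-module. Then {x ∈ A⊗_O N : (a⊗1)x = (1⊗a)x for all a ∈ A} = {x ∈ A⊗_O N : (s⊗1)x = (1⊗s)x}. -/
import Mathlib


open TensorProduct

section Aux

variable {O A : Type*} [CommRing O] [CommRing A] [Algebra O A]
variable {N : Type*} [AddCommGroup N] [Module O N] [Module A N] [IsScalarTower O A N]

private noncomputable def T (a : A) : A ⊗[O] N →ₗ[O] A ⊗[O] N :=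
  LinearMap.lTensor A ((LinearMap.lsmul A N a).restrictScalars O)

private lemma T_tmul (a p : A) (n : N) : T (O := O) a (p ⊗ₜ[O] n) = p ⊗ₜ[O] (a • n) := rfl

private lemma T_mul (a b : A) (x : A ⊗[O] N) : T (a * b) x = T a (T b x) := by
  induction x using TensorProduct.induction_on with
  | zero => simp
  | tmul p n => simp [T_tmul, mul_smul]
  | add y z hy hz => simp [map_add, hy, hz]

private lemma T_add (a b : A) (x : A ⊗[O] N) : T (O := O) (a + b) x = T a x + T b x := by
  induction x using TensorProduct.induction_on with
  | zero => simp
  | tmul p n => simp [T_tmul, add_smul, TensorProduct.tmul_add]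
  | add y z hy hz =>
      simp only [map_add, hy, hz]; abel

private lemma T_smul_comm (a c : A) (x : A ⊗[O] N) : T (O := O) a (c • x) = c • T a x := by
  induction x using TensorProduct.induction_on with
  | zero => simp
  | tmul p n => simp [TensorProduct.smul_tmul', T_tmul]
  | add y z hy hz => simp [smul_add, map_add, hy, hz]

private lemma T_algebraMap (r : O) (x : A ⊗[O] N) :
    T (O := O) (algebraMap O A r) x = r • x := by
  induction x using TensorProduct.induction_on with
  | zero => simp
  | tmul p n => simp [T_tmul, algebraMap_smul, TensorProduct.tmul_smul]
  | add y z hy hz => simp [smul_add, map_add, hy, hz]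

end Aux

/-- if `s ∈ A` generates `K = Frac A` over `F = Frac O` (every `a ∈ A` is a
quotient of elements of `O[s]`) and `A ⊗[O] N` has the relevant torsion-freeness, then the
condition `(a⊗1)x = (1⊗a)x` for all `a ∈ A` is equivalent to the single condition for `a = s`. -/
theorem stmt5 (O A : Type*) [CommRing O] [IsDomain O] [CommRing A] [IsDomain A] [Algebra O A]
    (N : Type*) [AddCommGroup N] [Module O N] [Module A N] [IsScalarTower O A N]
    (s : A)
    (hgen : ∀ a : A, ∃ b c : A, b ∈ Algebra.adjoin O ({s} : Set A) ∧
      c ∈ Algebra.adjoin O ({s} : Set A) ∧ c ≠ 0 ∧ c * a = b)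
    (htf : ∀ c : A, c ≠ 0 → ∀ x : A ⊗[O] N, c • x = 0 → x = 0) :
    {x : A ⊗[O] N | ∀ a : A,
        a • x = LinearMap.lTensor A ((LinearMap.lsmul A N a).restrictScalars O) x} =
    {x : A ⊗[O] N |
        s • x = LinearMap.lTensor A ((LinearMap.lsmul A N s).restrictScalars O) x} := by
  ext x
  simp only [Set.mem_setOf_eq]
  constructor
  · intro h; exact h s
  · intro hs a
    change a • x = T a x
    change s • x = T s x at hs
    -- first: for all b in the adjoin
    have hadj : ∀ b ∈ Algebra.adjoin O ({s} : Set A), b • x = T b x := by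
      intro b hb
      induction hb using Algebra.adjoin_induction with
      | mem b hb =>
          rcases hb with rfl
          exact hs
      | algebraMap r =>
          rw [T_algebraMap, algebraMap_smul]
      | add b c hb hc ihb ihc =>
          rw [add_smul, T_add, ihb, ihc]
      | mul b c hb hc ihb ihc =>
          rw [mul_smul, ihc, ← T_smul_comm, ihb, ← T_mul, mul_comm, T_mul]
    rcases hgen a with ⟨b, c, hbmem, hcmem, hc0, hca⟩
    apply sub_eq_zero.mp
    apply htf c hc0
    rw [smul_sub, sub_eq_zero]
    calc c • a • x = (c * a) • x := (mul_smul c a x).symm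
      _ = b • x := by rw [hca]
      _ = T b x := hadj b hbmem
      _ = T (c * a) x := by rw [hca]
      _ = T a (T c x) := by rw [mul_comm, T_mul]
      _ = T a (c • x) := by rw [hadj c hcmem]
      _ = c • T a x := T_smul_comm a c x
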